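/- Let X be a real Banach space with a partial order ≼ that is translation invariant, invariant under multiplication by nonnegative scalars, has norm-closed positive cone, and is regular (every ≼-increasing sequence with a ≼-upper bound is norm-convergent). Then for any u, v ∈ X with u ≼ v, the order interval [u, v] = {z : u ≼ z ≼ v} is bi-chain-complete: every nonempty chain C ⊆ [u, v] has both a least ≼-upper bound and a greatest ≼-lower bound belonging to [u, v]. -/

import Mathlib

/-!
The order of `X` is closed, so it suffices to show that the closure `K` of a chain `C ⊆ [u, v]`
is compact: `K` is again a chain, and a nonempty compact chain has a greatest and a least
element, which are the supremum and the infimum of `C`. Compactness comes from total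
boundedness: by Ramsey's theorem every sequence in `C` has a monotone or an antitone
subsequence, and regularity (applied to `-x` in the antitone case) makes it converge.
-/

open Filter Set Topology

theorem totallyBounded_of_forall_exists_cauchySeq_subseq {X : Type*} [UniformSpace X]
    {s : Set X} (h : ∀ f : ℕ → X, (∀ n, f n ∈ s) → ∃ φ : ℕ → ℕ, StrictMono φ ∧ CauchySeq (f ∘ φ)) :
    TotallyBounded s := by
  intro V hV
  by_contra! hs
  obtain ⟨f, hfs, hfV⟩ : ∃ f : ℕ → X, (∀ n, f n ∈ s) ∧
      ∀ n m, m < n → f m ∉ UniformSpace.ball (f n) V := by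
    simp only [not_subset, mem_iUnion₂, not_exists, exists_prop] at hs
    simpa only [forall_and, forall_mem_image, not_and] using! seq_of_forall_finite_exists hs
  obtain ⟨φ, hφ, hcauchy⟩ := h f hfs
  obtain ⟨N, hN⟩ := hcauchy.mem_entourage hV
  exact hfV (φ (N + 1)) (φ N) (hφ N.lt_succ_self) (hN (N + 1) N N.le_succ le_rfl)

theorem IsChain.exists_monotone_or_antitone_subseq {α : Type*} [Preorder α] {s : Set α}
    (hs : IsChain (· ≤ ·) s) {f : ℕ → α} (hf : ∀ n, f n ∈ s) :
    ∃ φ : ℕ → ℕ, StrictMono φ ∧ (Monotone (f ∘ φ) ∨ Antitone (f ∘ φ)) := by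
  obtain ⟨g, hmono | hanti⟩ := exists_increasing_or_nonincreasing_subseq (· ≤ ·) f
  · exact ⟨g, g.strictMono, Or.inl <| monotone_nat_of_le_succ fun n => hmono n _ n.lt_succ_self⟩
  · refine ⟨g, g.strictMono, Or.inr <| antitone_nat_of_succ_le fun n => ?_⟩
    exact (hs.total (hf _) (hf _)).resolve_left (hanti n _ n.lt_succ_self)

section ClosedOrder

variable {α : Type*} [TopologicalSpace α] [Preorder α]

theorem IsCompact.exists_isLeast_of_directedOn [ClosedIicTopology α] {s : Set α}
    (hs : IsCompact s) (hne : s.Nonempty) (hd : DirectedOn (· ≥ ·) s) : ∃ x, IsLeast s x := by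
  have : Nonempty s := hne.to_subtype
  suffices (s ∩ ⋂ x ∈ s, Iic x).Nonempty from
    ⟨this.choose, this.choose_spec.1, mem_iInter₂.mp this.choose_spec.2⟩
  rw [biInter_eq_iInter]
  by_contra! H
  have hdir : Directed (· ⊇ ·) fun x : s => Iic (x : α) := fun x y => by
    obtain ⟨z, hz, hzx, hzy⟩ := hd x x.2 y y.2
    exact ⟨⟨z, hz⟩, Iic_subset_Iic.mpr hzx, Iic_subset_Iic.mpr hzy⟩
  obtain ⟨x, hx⟩ := hs.elim_directed_family_closed _ (fun _ => isClosed_Iic) H hdir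
  exact not_nonempty_iff_eq_empty.mpr hx ⟨x, x.2, le_rfl⟩

theorem IsCompact.exists_isGreatest_of_directedOn [ClosedIciTopology α] {s : Set α}
    (hs : IsCompact s) (hne : s.Nonempty) (hd : DirectedOn (· ≤ ·) s) : ∃ x, IsGreatest s x :=
  IsCompact.exists_isLeast_of_directedOn (α := αᵒᵈ) hs hne hd

variable [OrderClosedTopology α]

theorem IsChain.closure {s : Set α} (hs : IsChain (· ≤ ·) s) : IsChain (· ≤ ·) (closure s) := by
  have hclosed : IsClosed {p : α × α | p.1 ≤ p.2 ∨ p.2 ≤ p.1} :=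
    (isClosed_le continuous_fst continuous_snd).union (isClosed_le continuous_snd continuous_fst)
  have hsub : s ×ˢ s ⊆ {p : α × α | p.1 ≤ p.2 ∨ p.2 ≤ p.1} := fun p hp => hs.total hp.1 hp.2
  intro x hx y hy _
  have hxy : (x, y) ∈ _root_.closure (s ×ˢ s) := by rw [closure_prod_eq]; exact ⟨hx, hy⟩
  exact hclosed.closure_subset_iff.mpr hsub hxy

theorem exists_isLUB_mem_closure_of_isChain {s : Set α} (hs : IsChain (· ≤ ·) s)
    (hne : s.Nonempty) (hK : IsCompact (closure s)) : ∃ b ∈ closure s, IsLUB s b := by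
  obtain ⟨b, hb⟩ := hK.exists_isGreatest_of_directedOn hne.closure hs.closure.directedOn
  exact ⟨b, hb.1, (isLUB_iff_of_subset_of_subset_closure subset_closure subset_rfl).2 hb.isLUB⟩

theorem exists_isGLB_mem_closure_of_isChain {s : Set α} (hs : IsChain (· ≤ ·) s)
    (hne : s.Nonempty) (hK : IsCompact (closure s)) : ∃ a ∈ closure s, IsGLB s a :=
  exists_isLUB_mem_closure_of_isChain (α := αᵒᵈ) hs.symm hne hK

end ClosedOrder

def IsRegularOrder (X : Type*) [TopologicalSpace X] [Preorder X] : Prop :=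
  ∀ x : ℕ → X, (∀ n, x n ≤ x (n + 1)) → (∃ b : X, ∀ n, x n ≤ b) → ∃ l : X, Tendsto x atTop (𝓝 l)

section RegularOrder

variable {X : Type*} [AddCommGroup X] [PartialOrder X] [IsOrderedAddMonoid X] [TopologicalSpace X]
  [ContinuousNeg X]

theorem IsRegularOrder.exists_tendsto_of_antitone (hreg : IsRegularOrder X) {x : ℕ → X}
    (hx : Antitone x) {a : X} (ha : ∀ n, a ≤ x n) : ∃ l : X, Tendsto x atTop (𝓝 l) := by
  obtain ⟨l, hl⟩ := hreg (fun n => -x n) (fun n => neg_le_neg (hx n.le_succ))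
    ⟨-a, fun n => neg_le_neg (ha n)⟩
  exact ⟨-l, by simpa using hl.neg⟩

theorem IsRegularOrder.exists_tendsto_subseq_of_isChain (hreg : IsRegularOrder X) {s : Set X}
    (hs : IsChain (· ≤ ·) s) {u v : X} (hsuv : s ⊆ Icc u v) {f : ℕ → X} (hf : ∀ n, f n ∈ s) :
    ∃ φ : ℕ → ℕ, StrictMono φ ∧ ∃ l : X, Tendsto (f ∘ φ) atTop (𝓝 l) := by
  obtain ⟨φ, hφ, hmono | hanti⟩ := hs.exists_monotone_or_antitone_subseq hf
  · exact ⟨φ, hφ, hreg _ (fun n => hmono n.le_succ) ⟨v, fun n => (hsuv (hf (φ n))).2⟩⟩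
  · exact ⟨φ, hφ, hreg.exists_tendsto_of_antitone hanti fun n => (hsuv (hf (φ n))).1⟩

end RegularOrder

theorem orderInterval_biChainComplete_of_regular_general {X : Type*} [NormedAddCommGroup X]
    [CompleteSpace X] [PartialOrder X]
    (hadd : ∀ x y z : X, x ≤ y → x + z ≤ y + z)
    (hcone : IsClosed {x : X | 0 ≤ x})
    (hreg : ∀ x : ℕ → X, (∀ n, x n ≤ x (n + 1)) → (∃ b : X, ∀ n, x n ≤ b) →
      ∃ l : X, Filter.Tendsto x Filter.atTop (nhds l)) :
    ∀ u v : X, u ≤ v →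
      ∀ C : Set X, C ⊆ Set.Icc u v → C.Nonempty → IsChain (· ≤ ·) C →
        (∃ b ∈ Set.Icc u v, IsLUB C b) ∧ (∃ a ∈ Set.Icc u v, IsGLB C a) := by
  have : IsOrderedAddMonoid X := { add_le_add_left := fun x y h z => hadd x y z h }
  have : OrderClosedTopology X := ⟨isClosed_le_of_isClosed_nonneg hcone⟩
  intro u v _ C hCuv hne hC
  have hK : IsCompact (closure C) := by
    refine (totallyBounded_of_forall_exists_cauchySeq_subseq fun f hf => ?_).closure
      |>.isCompact_of_isClosed isClosed_closure
    obtain ⟨φ, hφ, l, hl⟩ := IsRegularOrder.exists_tendsto_subseq_of_isChain hreg hC hCuv hf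
    exact ⟨φ, hφ, hl.cauchySeq⟩
  have hKuv : closure C ⊆ Icc u v := closure_minimal hCuv isClosed_Icc
  obtain ⟨b, hbK, hb⟩ := exists_isLUB_mem_closure_of_isChain hC hne hK
  obtain ⟨a, haK, ha⟩ := exists_isGLB_mem_closure_of_isChain hC hne hK
  exact ⟨⟨b, hKuv hbK, hb⟩, ⟨a, hKuv haK, ha⟩⟩

/-- In a regular partially ordered Banach space, every order interval `[u, v]` is
bi-chain-complete. -/
theorem orderInterval_biChainComplete_of_regular {X : Type*} [NormedAddCommGroup X]
    [NormedSpace ℝ X] [CompleteSpace X] [PartialOrder X]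
    (hadd : ∀ x y z : X, x ≤ y → x + z ≤ y + z)
    (hsmul : ∀ α : ℝ, 0 ≤ α → ∀ x y : X, x ≤ y → α • x ≤ α • y)
    (hcone : IsClosed {x : X | 0 ≤ x})
    (hreg : ∀ x : ℕ → X, (∀ n, x n ≤ x (n + 1)) → (∃ b : X, ∀ n, x n ≤ b) →
      ∃ l : X, Filter.Tendsto x Filter.atTop (nhds l)) :
    ∀ u v : X, u ≤ v →
      ∀ C : Set X, C ⊆ Set.Icc u v → C.Nonempty → IsChain (· ≤ ·) C →
        (∃ b ∈ Set.Icc u v, IsLUB C b) ∧ (∃ a ∈ Set.Icc u v, IsGLB C a) :=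
  orderInterval_biChainComplete_of_regular_general hadd hcone hreg
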